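/- Let x : ℝ → 𝔹ⁿ, μ ∈ 𝔹ⁿ, T > 0 and t' ∈ ℝ be such that (-∞, t'] ⊆ T_μ^x and for every t ∈ T_μ^x ∩ [t', ∞) and every z ∈ ℤ with t + zT ≥ t', one has t + zT ∈ T_μ^x. Suppose t₀, t₁ ∈ ℝ and c, v ∈ 𝔹ⁿ satisfy: x(t) = μ for all t < t₀; x(t₀) ≠ μ; t₁ < t₀ + T; there exists ε > 0 with x(ξ) = c for all ξ ∈ (t₀ + T - ε, t₀ + T); x(t) = c for all t ∈ [t₁, t₀ + T); there exists ε > 0 with x(ξ) = v for all ξ ∈ (t₁ - ε, t₁); and v ≠ x(t₁). Then (-∞, t₀) ∪ ⋃_{k∈ℕ} [t₁ + kT, t₀ + (k+1)T) ⊆ T_μ^x. -/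

import Mathlib

open Set Filter Topology

/-! The constant run `(-∞, t₀)` at `μ` forces `t₀ ≤ t₁`, since otherwise the left limit `v` at `t₁`
would equal `x t₁ = μ`. Shifting a point of `(t₁ - T, t₀)` by one period lands in `[t₁, t₀ + T)`,
so `c = μ`; and shifting `[t₁, t₀ + T)` by `kT` covers the `k`-th interval. -/

theorem eventually_nhdsLT_of_forall_Ioo {α : Type*} {x : ℝ → α} {s : ℝ} {v : α}
    (h : ∃ ε > 0, ∀ ξ ∈ Ioo (s - ε) s, x ξ = v) : ∀ᶠ ξ in 𝓝[<] s, x ξ = v := by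
  obtain ⟨ε, hε, hv⟩ := h
  filter_upwards [Ioo_mem_nhdsLT (sub_lt_self s hε)] using hv

theorem eq_of_eventually_nhdsLT {α : Type*} {x : ℝ → α} {s : ℝ} {v w : α}
    (hv : ∀ᶠ ξ in 𝓝[<] s, x ξ = v) (hw : ∀ᶠ ξ in 𝓝[<] s, x ξ = w) : v = w :=
  let ⟨_, hξv, hξw⟩ := (hv.and hw).exists
  hξv.symm.trans hξw

theorem stmt_7_general (n : ℕ) (x : ℝ → (Fin n → Bool)) (μ : Fin n → Bool)
    (T t' : ℝ) (hT : 0 < T)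
    (hP1 : Set.Iic t' ⊆ {t : ℝ | x t = μ})
    (hP2 : ∀ t ∈ {t : ℝ | x t = μ} ∩ Set.Ici t', ∀ z : ℤ,
      t' ≤ t + (z : ℝ) * T → t + (z : ℝ) * T ∈ {t : ℝ | x t = μ})
    (t₀ t₁ : ℝ) (c v : Fin n → Bool)
    (h0a : ∀ t < t₀, x t = μ)
    (h0b : x t₀ ≠ μ)
    (h1a : t₁ < t₀ + T)
    (h1b : ∀ t ∈ Set.Ico t₁ (t₀ + T), x t = c)
    (hv : ∃ ε > 0, ∀ ξ ∈ Set.Ioo (t₁ - ε) t₁, x ξ = v)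
    (h1c : v ≠ x t₁) :
    Set.Iio t₀ ∪ (⋃ k : ℕ, Set.Ico (t₁ + (k : ℝ) * T) (t₀ + ((k : ℝ) + 1) * T))
      ⊆ {t : ℝ | x t = μ} := by
  have ht' : t' < t₀ := lt_of_not_ge fun h => h0b (hP1 h)
  have ht₀₁ : t₀ ≤ t₁ := by
    by_contra! h
    have hμ : ∀ᶠ ξ in 𝓝[<] t₁, x ξ = μ :=
      mem_of_superset self_mem_nhdsWithin fun ξ hξ => h0a ξ (lt_trans hξ h)
    exact h1c ((eq_of_eventually_nhdsLT (eventually_nhdsLT_of_forall_Ioo hv) hμ).trans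
      (h0a t₁ h).symm)
  have hcμ : c = μ := by
    obtain ⟨s, hs, hst₀⟩ := exists_between (max_lt ht' (sub_lt_iff_lt_add.mpr h1a))
    have hs' : t' < s ∧ t₁ - T < s := max_lt_iff.mp hs
    have hshift : x (s + T) = μ := by
      simpa using hP2 s ⟨h0a s hst₀, hs'.1.le⟩ 1 (by simp; linarith)
    exact (h1b (s + T) ⟨by linarith, by linarith⟩).symm.trans hshift
  rintro t (ht | ht)
  · exact h0a t ht
  obtain ⟨k, hk₁, hk₂⟩ := mem_iUnion.mp ht
  have hkT : 0 ≤ (k : ℝ) * T := by positivity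
  have hbase : x (t - k * T) = μ := hcμ ▸ h1b _ ⟨by linarith, by linarith⟩
  simpa using hP2 (t - k * T) ⟨hbase, by rw [mem_Ici]; linarith⟩ k (by simp; linarith)

/-- Under the same hypotheses as Statement 6, the set
`(-∞, t₀) ∪ ⋃_{k∈ℕ} [t₁ + kT, t₀ + (k+1)T)` is contained in `T_μ^x`. -/
theorem stmt_7 (n : ℕ) (x : ℝ → (Fin n → Bool)) (μ : Fin n → Bool)
    (T t' : ℝ) (hT : 0 < T)
    (hP1 : Set.Iic t' ⊆ {t : ℝ | x t = μ})
    (hP2 : ∀ t ∈ {t : ℝ | x t = μ} ∩ Set.Ici t', ∀ z : ℤ,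
      t' ≤ t + (z : ℝ) * T → t + (z : ℝ) * T ∈ {t : ℝ | x t = μ})
    (t₀ t₁ : ℝ) (c v : Fin n → Bool)
    (h0a : ∀ t < t₀, x t = μ)
    (h0b : x t₀ ≠ μ)
    (h1a : t₁ < t₀ + T)
    (hc : ∃ ε > 0, ∀ ξ ∈ Set.Ioo (t₀ + T - ε) (t₀ + T), x ξ = c)
    (h1b : ∀ t ∈ Set.Ico t₁ (t₀ + T), x t = c)
    (hv : ∃ ε > 0, ∀ ξ ∈ Set.Ioo (t₁ - ε) t₁, x ξ = v)
    (h1c : v ≠ x t₁) :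
    Set.Iio t₀ ∪ (⋃ k : ℕ, Set.Ico (t₁ + (k : ℝ) * T) (t₀ + ((k : ℝ) + 1) * T))
      ⊆ {t : ℝ | x t = μ} :=
  stmt_7_general n x μ T t' hT hP1 hP2 t₀ t₁ c v h0a h0b h1a h1b hv h1c
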